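/- Let G be a finite simple graph and let C_1 and C_2 be disjoint sets of vertices, each inducing a complete subgraph (clique) of G, with |C_1| = n and |C_2| = m. Let xy be an edge of G with x ∈ C_1 and y ∈ C_2, and let d_x, d_y denote the degrees of x and y. Then for every α ∈ [0,1], W(m_x, m_y) ≥ α + (1−α)·((n−1)/d_x + (m−1)/d_y − 1); equivalently, κ^α(xy) ≤ (1−α)·(2 − (n−1)/d_x − (m−1)/d_y). -/

import Mathlib

open Finset

/-- A probability measure on the vertex set. -/
def IsProbMeasure {V : Type*} [Fintype V] (μ : V → ℝ) : Prop :=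
  (∀ z, 0 ≤ μ z) ∧ ∑ z, μ z = 1

/-- A transference plan between two probability measures. -/
def IsTransferencePlan {V : Type*} [Fintype V] (μ ν : V → ℝ) (π : V → V → ℝ) : Prop :=
  (∀ i j, 0 ≤ π i j) ∧ (∀ i, ∑ j, π i j = μ i) ∧ (∀ j, ∑ i, π i j = ν j)

/-- The 1-Wasserstein distance between two measures on a graph:
the infimum of the transport cost over all transference plans. -/
noncomputable def Wass {V : Type*} [Fintype V] (G : SimpleGraph V) (μ ν : V → ℝ) : ℝ :=
  sInf {c : ℝ | ∃ π : V → V → ℝ, IsTransferencePlan μ ν π ∧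
    c = ∑ i : V, ∑ j : V, π i j * (G.dist i j : ℝ)}

open scoped Classical in
/-- The α-lazy random walk measure at a vertex `x`:
mass α at `x`, mass (1-α)/dₓ at each neighbour of `x`. -/
noncomputable def lazyWalk {V : Type*} [Fintype V] (G : SimpleGraph V) (α : ℝ) (x : V) :
    V → ℝ :=
  fun z =>
    if z = x then α
    else if G.Adj x z then (1 - α) / ((G.neighborSet x).ncard : ℝ) else 0

/-- The α-Ollivier-Ricci curvature of the edge `xy`: κ = 1 − W(mₓ, m_y). -/
noncomputable def kappa {V : Type*} [Fintype V] (G : SimpleGraph V) (α : ℝ) (x y : V) : ℝ :=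
  1 - Wass G (lazyWalk G α x) (lazyWalk G α y)

/-!
Test the transport against the indicator of `C₁`. On pairs `(i, j)` with `i` in the support of
`mₓ` and `j` in the support of `m_y` it is 1-Lipschitz, since such vertices are joined through the
edge `xy`; this is all that Kantorovich's weak duality needs. Hence `W(mₓ, m_y) ≥ mₓ(C₁) - m_y(C₁)
≥ mₓ(C₁) + m_y(C₂) - 1`, and a clique through `x` carries mass `α + (1 - α)(|C| - 1)/dₓ` under `mₓ`.
-/

section Transport

variable {V : Type*} [Fintype V] {μ ν : V → ℝ} {π : V → V → ℝ}

namespace IsTransferencePlan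

lemma le_left (hπ : IsTransferencePlan μ ν π) (i j : V) : π i j ≤ μ i :=
  hπ.2.1 i ▸ single_le_sum (fun k _ => hπ.1 i k) (mem_univ j)

lemma le_right (hπ : IsTransferencePlan μ ν π) (i j : V) : π i j ≤ ν j :=
  hπ.2.2 j ▸ single_le_sum (fun k _ => hπ.1 k j) (mem_univ i)

lemma sum_sum_mul_sub (hπ : IsTransferencePlan μ ν π) (f : V → ℝ) :
    ∑ i, ∑ j, π i j * (f i - f j) = ∑ i, f i * μ i - ∑ j, f j * ν j := by
  have hleft : ∑ i, ∑ j, π i j * f i = ∑ i, f i * μ i :=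
    sum_congr rfl fun i _ => by rw [← sum_mul, hπ.2.1 i, mul_comm]
  have hright : ∑ i, ∑ j, π i j * f j = ∑ j, f j * ν j := by
    rw [sum_comm]
    exact sum_congr rfl fun j _ => by rw [← sum_mul, hπ.2.2 j, mul_comm]
  simp only [mul_sub, sum_sub_distrib, hleft, hright]

end IsTransferencePlan

lemma IsProbMeasure.isTransferencePlan_mul (hμ : IsProbMeasure μ) (hν : IsProbMeasure ν) :
    IsTransferencePlan μ ν (fun i j => μ i * ν j) :=
  ⟨fun i j => mul_nonneg (hμ.1 i) (hν.1 j),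
    fun i => by rw [← mul_sum, hν.2, mul_one],
    fun j => by rw [← sum_mul, hμ.2, one_mul]⟩

variable (G : SimpleGraph V)

theorem sum_mul_sub_sum_mul_le_wass (hμ : IsProbMeasure μ) (hν : IsProbMeasure ν) (f : V → ℝ)
    (hf : ∀ i j, μ i ≠ 0 → ν j ≠ 0 → f i - f j ≤ G.dist i j) :
    ∑ i, f i * μ i - ∑ j, f j * ν j ≤ Wass G μ ν := by
  refine le_csInf ⟨_, _, hμ.isTransferencePlan_mul hν, rfl⟩ ?_
  rintro c ⟨π, hπ, rfl⟩
  rw [← hπ.sum_sum_mul_sub]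
  refine sum_le_sum fun i _ => sum_le_sum fun j _ => ?_
  obtain hzero | hpos := (hπ.1 i j).eq_or_lt
  · simp [← hzero]
  refine mul_le_mul_of_nonneg_left (hf i j ?_ ?_) hpos.le
  · exact (hpos.trans_le (hπ.le_left i j)).ne'
  · exact (hpos.trans_le (hπ.le_right i j)).ne'

theorem sum_sub_sum_le_wass (hμ : IsProbMeasure μ) (hν : IsProbMeasure ν)
    (hreach : ∀ i j, μ i ≠ 0 → ν j ≠ 0 → G.Reachable i j) (C : Finset V) :
    ∑ i ∈ C, μ i - ∑ j ∈ C, ν j ≤ Wass G μ ν := by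
  classical
  have hind (ρ : V → ℝ) : ∑ i, (if i ∈ C then 1 else 0) * ρ i = ∑ i ∈ C, ρ i := by
    simp only [ite_mul, one_mul, zero_mul, sum_ite_mem, univ_inter]
  rw [← hind μ, ← hind ν]
  refine sum_mul_sub_sum_mul_le_wass G hμ hν _ fun i j hi hj => ?_
  have hdist : (0 : ℝ) ≤ G.dist i j := Nat.cast_nonneg _
  by_cases hiC : i ∈ C <;> by_cases hjC : j ∈ C <;>
    simp only [hiC, hjC, if_true, if_false] <;> try linarith
  have hij : i ≠ j := fun h => hjC (h ▸ hiC)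
  have hone : (1 : ℝ) ≤ G.dist i j := by exact_mod_cast (hreach i j hi hj).pos_dist_of_ne hij
  linarith

theorem sum_add_sum_sub_one_le_wass (hμ : IsProbMeasure μ) (hν : IsProbMeasure ν)
    (hreach : ∀ i j, μ i ≠ 0 → ν j ≠ 0 → G.Reachable i j) {C D : Finset V}
    (hCD : Disjoint C D) :
    ∑ i ∈ C, μ i + ∑ j ∈ D, ν j - 1 ≤ Wass G μ ν := by
  classical
  have hunion : ∑ j ∈ C, ν j + ∑ j ∈ D, ν j ≤ 1 := by
    rw [← sum_union hCD, ← hν.2]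
    exact sum_le_sum_of_subset_of_nonneg (subset_univ _) fun j _ _ => hν.1 j
  linarith [sum_sub_sum_le_wass G hμ hν hreach C]

end Transport

section LazyWalk

open scoped Classical

variable {V : Type*} [Fintype V] {G : SimpleGraph V} {α : ℝ} {x z : V}

lemma lazyWalk_eq_add (z : V) :
    lazyWalk G α x z = (if z = x then α else 0) +
      if G.Adj x z then (1 - α) / ((G.neighborSet x).ncard : ℝ) else 0 := by
  unfold lazyWalk
  split_ifs with hzx hadj
  · subst hzx
    exact absurd hadj G.irrefl
  all_goals ring

lemma lazyWalk_nonneg (hα0 : 0 ≤ α) (hα1 : α ≤ 1) (z : V) : 0 ≤ lazyWalk G α x z := by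
  unfold lazyWalk
  split_ifs
  · exact hα0
  · exact div_nonneg (by linarith) (by positivity)
  · exact le_rfl

lemma reachable_of_lazyWalk_ne_zero (h : lazyWalk G α x z ≠ 0) : G.Reachable x z := by
  unfold lazyWalk at h
  split_ifs at h with hzx hadj
  · subst hzx
    rfl
  · exact hadj.reachable
  · exact (h rfl).elim

lemma sum_lazyWalk_of_mem {S : Finset V} (hx : x ∈ S) :
    ∑ z ∈ S, lazyWalk G α x z =
      α + (1 - α) * (#{z ∈ S | G.Adj x z} / ((G.neighborSet x).ncard : ℝ)) := by
  simp only [lazyWalk_eq_add, sum_add_distrib, sum_ite_eq', if_pos hx, ← sum_filter, sum_const,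
    nsmul_eq_mul]
  ring

lemma isProbMeasure_lazyWalk (hα0 : 0 ≤ α) (hα1 : α ≤ 1) (hx : 0 < (G.neighborSet x).ncard) :
    IsProbMeasure (lazyWalk G α x) := by
  refine ⟨lazyWalk_nonneg hα0 hα1, ?_⟩
  have hdeg : #{z | G.Adj x z} = (G.neighborSet x).ncard := by
    rw [← SimpleGraph.coe_neighborFinset, Set.ncard_coe_finset, SimpleGraph.neighborFinset_eq_filter]
  rw [sum_lazyWalk_of_mem (mem_univ x), hdeg, div_self (by positivity), mul_one, add_sub_cancel]

lemma sum_lazyWalk_of_isClique {C : Finset V} (hC : G.IsClique (C : Set V)) (hx : x ∈ C) :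
    ∑ z ∈ C, lazyWalk G α x z =
      α + (1 - α) * (((#C : ℝ) - 1) / ((G.neighborSet x).ncard : ℝ)) := by
  have hfilter : {z ∈ C | G.Adj x z} = C.erase x := by
    ext z
    simp only [mem_filter, mem_erase]
    exact ⟨fun ⟨hz, hadj⟩ => ⟨hadj.ne', hz⟩, fun ⟨hzx, hz⟩ => ⟨hz, hC hx hz (Ne.symm hzx)⟩⟩
  rw [sum_lazyWalk_of_mem hx, hfilter, card_erase_of_mem hx,
    Nat.cast_sub (card_pos.mpr ⟨x, hx⟩), Nat.cast_one]

end LazyWalk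

/-- If `C₁`, `C₂` are disjoint cliques of sizes `n`, `m` in a graph `G`
and `xy` is an edge with `x ∈ C₁`, `y ∈ C₂`, then for every `α ∈ [0,1]`,
`W(mₓ, m_y) ≥ α + (1−α)((n−1)/dₓ + (m−1)/d_y − 1)`; equivalently,
`κ^α(xy) ≤ (1−α)(2 − (n−1)/dₓ − (m−1)/d_y)`. -/
theorem wasserstein_lower_bound_two_cliques
    {V : Type*} [Fintype V] (G : SimpleGraph V)
    (C₁ C₂ : Finset V) (hdisj : Disjoint C₁ C₂)
    (hcl₁ : ∀ u ∈ C₁, ∀ v ∈ C₁, u ≠ v → G.Adj u v)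
    (hcl₂ : ∀ u ∈ C₂, ∀ v ∈ C₂, u ≠ v → G.Adj u v)
    (n m : ℕ) (hn : C₁.card = n) (hm : C₂.card = m)
    (x y : V) (hx : x ∈ C₁) (hy : y ∈ C₂) (hxy : G.Adj x y)
    (α : ℝ) (hα0 : 0 ≤ α) (hα1 : α ≤ 1) :
    α + (1 - α) * (((n : ℝ) - 1) / ((G.neighborSet x).ncard : ℝ) +
        ((m : ℝ) - 1) / ((G.neighborSet y).ncard : ℝ) - 1) ≤
      Wass G (lazyWalk G α x) (lazyWalk G α y) ∧
    kappa G α x y ≤ (1 - α) * (2 - ((n : ℝ) - 1) / ((G.neighborSet x).ncard : ℝ) -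
        ((m : ℝ) - 1) / ((G.neighborSet y).ncard : ℝ)) := by
  have hμ := isProbMeasure_lazyWalk (G := G) (x := x) hα0 hα1 <|
    (Set.ncard_pos (Set.toFinite _)).mpr ⟨y, hxy⟩
  have hν := isProbMeasure_lazyWalk (G := G) (x := y) hα0 hα1 <|
    (Set.ncard_pos (Set.toFinite _)).mpr ⟨x, hxy.symm⟩
  have hreach (i j : V) (hi : lazyWalk G α x i ≠ 0) (hj : lazyWalk G α y j ≠ 0) :
      G.Reachable i j :=
    ((reachable_of_lazyWalk_ne_zero hi).symm.trans hxy.reachable).trans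
      (reachable_of_lazyWalk_ne_zero hj)
  have hW := sum_add_sum_sub_one_le_wass G hμ hν hreach hdisj
  rw [sum_lazyWalk_of_isClique hcl₁ hx, sum_lazyWalk_of_isClique hcl₂ hy, hn, hm] at hW
  refine ⟨by linarith, ?_⟩
  unfold kappa
  linarith
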